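/- Let G' be the transformed graph of G and V_G ⊆ V_{G'} the copy of the original vertex set. For every tree t, the number of no-tottering tree-patterns of G with respect to t equals the number of tree-patterns of G' with respect to t whose root is mapped into V_G: ψ_t^{NT}(G) = Σ_{v ∈ V_G} ψ_t^{(v)}(G'). -/

import Mathlib

open scoped Classical

/-- A finite labeled directed graph: vertices `V`, edge relation `E`, vertex
labels `lv` and edge labels `le`, all labels taken in the alphabet `A`. -/
structure LGraph (A : Type) where
  V : Type
  [fintypeV : Fintype V]
  [decEqV : DecidableEq V]
  E : V → V → Prop
  [decE : DecidableRel E]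
  lv : V → A
  le : V → V → A

attribute [instance] LGraph.fintypeV LGraph.decEqV LGraph.decE

/-- A labeled rooted tree: a root label together with the list of children,
each child carrying the label of the edge connecting it to its parent and
the corresponding labeled subtree. -/
inductive LTree (A : Type) : Type where
  | node : A → List (A × LTree A) → LTree A

namespace LTree

variable {A : Type}

-- `size t` : number of nodes
mutual
def size : LTree A → ℕ
  | .node _ cs => 1 + sizeList cs
def sizeList : List (A × LTree A) → ℕ
  | [] => 0
  | (_, t) :: rest => size t + sizeList rest
end

-- `depth t` : maximal number of edges from the root to a node, plus one
mutual
def depth : LTree A → ℕ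
  | .node _ cs => 1 + depthList cs
def depthList : List (A × LTree A) → ℕ
  | [] => 0
  | (_, t) :: rest => max (depth t) (depthList rest)
end

-- `leaves t` : number of leaf nodes
mutual
def leaves : LTree A → ℕ
  | .node _ [] => 1
  | .node _ (c :: cs) => leavesList (c :: cs)
def leavesList : List (A × LTree A) → ℕ
  | [] => 0
  | (_, t) :: rest => leaves t + leavesList rest
end

/-- branching cardinality: number of leaves minus one -/
def branch (t : LTree A) : ℕ := t.leaves - 1

-- `balanced t h` : `t` is perfectly depth-balanced of order `h` (every leaf at depth `h`)
mutual
def balanced : LTree A → ℕ → Prop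
  | .node _ [], h => h = 1
  | .node _ (c :: cs), h => balancedList (c :: cs) (h - 1) ∧ 2 ≤ h
def balancedList : List (A × LTree A) → ℕ → Prop
  | [], _ => True
  | (_, t) :: rest, h => balanced t h ∧ balancedList rest h
end

end LTree

/-- A tree of graph vertices: the candidate images of the nodes of a tree
under a tree-pattern. -/
inductive VTree (V : Type) : Type where
  | node : V → List (VTree V) → VTree V

namespace VTree

variable {V : Type}

/-- the vertex at the root -/
def root : VTree V → V
  | .node u _ => u

/-- the list of subtrees at the root -/
def children : VTree V → List (VTree V)
  | .node _ ps => ps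

end VTree

/-- `isPattern G t p` : the decoration `p` of the tree `t` by vertices of `G` is a
tree-pattern of `G` with respect to `t`: node labels match, every tree edge is
realized by an edge of `G` with matching label, and sibling nodes are mapped to
distinct vertices. -/
def isPattern {A : Type} (G : LGraph A) : LTree A → VTree G.V → Prop
  | .node a cs, .node u ps =>
    G.lv u = a ∧ ps.length = cs.length ∧
    (∀ i j : Fin ps.length, i ≠ j → (ps.get i).root ≠ (ps.get j).root) ∧
    ∀ i : Fin ps.length, ∀ (h : (i : ℕ) < cs.length),
      G.E u (ps.get i).root ∧ G.le u (ps.get i).root = (cs.get ⟨i, h⟩).1 ∧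
      isPattern G (cs.get ⟨i, h⟩).2 (ps.get i)
termination_by _ p => sizeOf p
decreasing_by
  have h1 : sizeOf (ps.get i) < sizeOf ps := List.sizeOf_lt_of_mem (ps.get_mem i)
  simp only [VTree.node.sizeOf_spec]
  omega

/-- `psiRoot G t u` : number of tree-patterns of `G` with respect to `t` rooted at `u`. -/
noncomputable def psiRoot {A : Type} (G : LGraph A) (t : LTree A) (u : G.V) : ℕ :=
  Set.ncard {p : VTree G.V | isPattern G t p ∧ p.root = u}

/-- `psi G t` : number of tree-patterns of `G` with respect to `t`. -/
noncomputable def psi {A : Type} (G : LGraph A) (t : LTree A) : ℕ :=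
  Set.ncard {p : VTree G.V | isPattern G t p}

/-- The transformed graph `G'` of `G`: its vertices are the vertices and the edges
of `G`; there is an edge from `v` to `(v,t)` for every edge `(v,t)` of `G`, and an
edge from `(u,v)` to `(v,t)` for every pair of consecutive edges of `G` with `u ≠ t`.
A vertex `(u,v)` is labeled by `l(v)` and any edge pointing to `(v,t)` by `l((v,t))`. -/
noncomputable def transform {A : Type} (G : LGraph A) : LGraph A where
  V := G.V ⊕ {p : G.V × G.V // G.E p.1 p.2}
  fintypeV :=
    have : Finite {p : G.V × G.V // G.E p.1 p.2} := Subtype.finite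
    have : Fintype {p : G.V × G.V // G.E p.1 p.2} := Fintype.ofFinite _
    inferInstance
  decEqV := Classical.decEq _
  E := fun x y =>
    match x, y with
    | Sum.inl v, Sum.inr e => e.1.1 = v
    | Sum.inr e, Sum.inr e' => e'.1.1 = e.1.2 ∧ e.1.1 ≠ e'.1.2
    | _, _ => False
  decE := Classical.decRel _
  lv := fun x =>
    match x with
    | Sum.inl v => G.lv v
    | Sum.inr e => G.lv e.1.2
  le := fun _ y =>
    match y with
    | Sum.inl v => G.lv v
    | Sum.inr e => G.le e.1.1 e.1.2

namespace VTree

variable {V : Type}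

-- `noTot p` : the decorated tree (tree-pattern) `p` is no-tottering: no vertex
-- appears simultaneously as the parent and a child of a second vertex, i.e. for
-- every node, the vertex at this node differs from the vertices at its grandchildren
-- along each branch.
mutual
def noTot : VTree V → Prop
  | .node u ps => (∀ p ∈ ps, ∀ q ∈ p.children, u ≠ q.root) ∧ noTotList ps
def noTotList : List (VTree V) → Prop
  | [] => True
  | p :: rest => noTot p ∧ noTotList rest
end

-- `rootLeafWalks p` : the list of vertex sequences of `p` along the paths from the
-- root to the leaves.
mutual
def rootLeafWalks : VTree V → List (List V)
  | .node u [] => [[u]]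
  | .node u (p :: ps) => (rootLeafWalksList (p :: ps)).map (u :: ·)
def rootLeafWalksList : List (VTree V) → List (List V)
  | [] => []
  | p :: rest => rootLeafWalks p ++ rootLeafWalksList rest
end

end VTree

/-- a list of vertices is a walk of `G` -/
def isWalkList {A : Type} (G : LGraph A) (l : List G.V) : Prop :=
  ∀ i, (h : i + 1 < l.length) → G.E (l.get ⟨i, by omega⟩) (l.get ⟨i + 1, h⟩)

/-- a list of vertices is no-tottering: entries two steps apart are distinct -/
def noTotList' {V : Type} (l : List V) : Prop :=
  ∀ i, (h : i + 2 < l.length) → l.get ⟨i, by omega⟩ ≠ l.get ⟨i + 2, h⟩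

/-- `psiNT G t` : number of no-tottering tree-patterns of `G` with respect to `t`. -/
noncomputable def psiNT {A : Type} (G : LGraph A) (t : LTree A) : ℕ :=
  Set.ncard {p : VTree G.V | isPattern G t p ∧ p.noTot}

/-! Below the root, a tree-pattern of `G'` rooted at `v ∈ V_G` only visits vertices `(u, w)`
whose first component `u` is the vertex at the parent node, and an edge of `G'` leaves `(u, w)`
only towards some `(w, w')` with `w' ≠ u`. Keeping the head `w` of every vertex therefore turns it
into a no-tottering tree-pattern of `G` rooted at `v`, and re-attaching to every node the edge
from its parent inverts this. Summing these bijections over `v` gives the identity. -/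

theorem List.finite_setOf_forall₂ {α β : Type*} {R : α → β → Prop} (l : List α)
    (h : ∀ a ∈ l, {b | R a b}.Finite) : {l' | List.Forall₂ R l l'}.Finite := by
  induction l with
  | nil => simp [List.forall₂_nil_left_iff]
  | cons a l ih =>
    refine ((h a List.mem_cons_self).image2 List.cons
      (ih fun a ha => h a (List.mem_cons_of_mem _ ha))).subset ?_
    intro _ hl
    obtain ⟨b, l', hb, hl', rfl⟩ := List.forall₂_cons_left_iff.1 hl
    exact Set.mem_image2_of_mem hb hl'

theorem Set.Finite.ncard_eq_sum_ncard_fiber {α β : Type*} [Fintype β] {s : Set α}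
    (hs : s.Finite) (f : α → β) : s.ncard = ∑ b, {a ∈ s | f a = b}.ncard := by
  rw [Set.ncard_eq_toFinset_card _ hs,
    Finset.card_eq_sum_card_fiberwise (f := f) (t := Finset.univ)
      fun _ _ => Finset.mem_coe.2 (Finset.mem_univ _)]
  refine Finset.sum_congr rfl fun b _ => ?_
  rw [← Set.ncard_coe_finset]
  congr 1
  ext
  simp

namespace List.Forall₂

variable {α β : Type*} {R S : α → β → Prop} {l₁ : List α} {l₂ : List β}

theorem imp_of_mem (H : ∀ a ∈ l₁, ∀ b ∈ l₂, R a b → S a b) (h : Forall₂ R l₁ l₂) :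
    Forall₂ S l₁ l₂ := by
  induction h with
  | nil => exact .nil
  | cons hab _ ih =>
    exact .cons (H _ mem_cons_self _ mem_cons_self hab)
      (ih fun a ha b hb => H a (mem_cons_of_mem _ ha) b (mem_cons_of_mem _ hb))

theorem exists_mem_left (h : Forall₂ R l₁ l₂) {b : β} (hb : b ∈ l₂) : ∃ a ∈ l₁, R a b := by
  induction h with
  | nil => cases hb
  | cons hab _ ih =>
    rcases mem_cons.1 hb with rfl | hb
    · exact ⟨_, mem_cons_self, hab⟩
    · obtain ⟨a, ha, hab⟩ := ih hb
      exact ⟨a, mem_cons_of_mem _ ha, hab⟩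

end List.Forall₂

namespace LTree

variable {A : Type}

theorem sizeOf_snd_lt_of_mem {cs : List (A × LTree A)} {c : A × LTree A} (hc : c ∈ cs) :
    sizeOf c.2 < sizeOf cs := by
  have := List.sizeOf_lt_of_mem hc
  cases c
  simp only [Prod.mk.sizeOf_spec] at this ⊢
  omega

@[elab_as_elim]
theorem induction {P : LTree A → Prop}
    (node : ∀ a cs, (∀ c ∈ cs, P c.2) → P (.node a cs)) : ∀ t, P t
  | .node a cs => node a cs fun c hc =>
    have := sizeOf_snd_lt_of_mem hc
    induction node c.2
termination_by t => t

end LTree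

namespace VTree

variable {V W : Type}

@[elab_as_elim]
theorem induction {P : VTree V → Prop}
    (node : ∀ u ps, (∀ p ∈ ps, P p) → P (.node u ps)) : ∀ p, P p
  | .node u ps => node u ps fun p _ => induction node p

def map (f : V → W) : VTree V → VTree W
  | .node u ps => .node (f u) (ps.map (map f))

@[simp]
theorem root_map (f : V → W) (p : VTree V) : (p.map f).root = f p.root := by
  cases p; simp [map, root]

theorem noTotList_iff {l : List (VTree V)} : noTotList l ↔ ∀ p ∈ l, p.noTot := by
  induction l with
  | nil => simp [noTotList]
  | cons p l ih => simp [noTotList, ih]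

theorem noTot_node_iff {u : V} {ps : List (VTree V)} :
    (node u ps).noTot ↔ ∀ p ∈ ps, (∀ q ∈ p.children, u ≠ q.root) ∧ p.noTot := by
  rw [noTot, noTotList_iff, forall₂_and]

end VTree

theorem isPattern_node_iff {A : Type} (G : LGraph A) (a : A) (cs : List (A × LTree A))
    (u : G.V) (ps : List (VTree G.V)) :
    isPattern G (.node a cs) (.node u ps) ↔ G.lv u = a ∧ (ps.map VTree.root).Nodup ∧
      List.Forall₂ (fun c p => G.E u p.root ∧ G.le u p.root = c.1 ∧ isPattern G c.2 p) cs ps := by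
  have hroots : ps.map VTree.root = List.ofFn fun i => (ps.get i).root := by
    conv_lhs => rw [← List.ofFn_get ps, List.map_ofFn]
    rfl
  rw [isPattern, List.forall₂_iff_get, hroots, List.nodup_ofFn, Function.Injective]
  constructor
  · rintro ⟨hl, hlen, hinj, hR⟩
    exact ⟨hl, fun i j h => not_imp_comm.1 (hinj i j) (not_not.2 h), hlen.symm,
      fun i h1 h2 => hR ⟨i, h2⟩ h1⟩
  · rintro ⟨hl, hinj, hlen, hR⟩
    exact ⟨hl, hlen.symm, fun i j => mt (@hinj i j), fun i h => hR i h i.2⟩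

theorem isPattern.adj_of_mem_children {A : Type} {G : LGraph A} {t : LTree A} {p : VTree G.V}
    (hp : isPattern G t p) {r : VTree G.V} (hr : r ∈ p.children) : G.E p.root r.root := by
  obtain ⟨a, cs⟩ := t
  obtain ⟨u, ps⟩ := p
  obtain ⟨-, -, hR⟩ := (isPattern_node_iff _ _ _ _ _).1 hp
  obtain ⟨c, -, hE, -⟩ := hR.exists_mem_left hr
  exact hE

theorem finite_setOf_isPattern {A : Type} (G : LGraph A) (t : LTree A) :
    {p : VTree G.V | isPattern G t p}.Finite := by
  induction t using LTree.induction with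
  | node a cs ih =>
    refine ((Set.finite_univ.prod (List.finite_setOf_forall₂ cs ih)).image
      fun x => VTree.node x.1 x.2).subset ?_
    rintro ⟨u, ps⟩ hp
    obtain ⟨-, -, hR⟩ := (isPattern_node_iff _ _ _ _ _).1 hp
    exact ⟨(u, ps), ⟨Set.mem_univ _, hR.imp fun _ _ h => h.2.2⟩, rfl⟩

namespace transform

variable {A : Type} {G : LGraph A}

-- A vertex `(u, w)` of `G'` has head `w` and tail `u`; a vertex `v ∈ V_G` has head `v` and no tail.
def head : (transform G).V → G.V
  | .inl v => v
  | .inr e => e.1.2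

def tail? : (transform G).V → Option G.V
  | .inl _ => none
  | .inr e => some e.1.1

theorem eq_of_head_eq_of_tail?_eq {x y : (transform G).V} (hh : head x = head y)
    (ht : tail? x = tail? y) : x = y := by
  rcases x with v | ⟨⟨u, v⟩, _⟩ <;> rcases y with v' | ⟨⟨u', v'⟩, _⟩ <;>
    simp only [head, tail?, Option.some.injEq, reduceCtorEq] at hh ht
  · rw [hh]
  · subst hh ht; rfl

theorem lv_eq (x : (transform G).V) : (transform G).lv x = G.lv (head x) := by
  cases x <;> rfl

theorem E_iff {x y : (transform G).V} : (transform G).E x y ↔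
    G.E (head x) (head y) ∧ tail? y = some (head x) ∧ tail? x ≠ some (head y) := by
  rcases x with v | ⟨⟨u, v⟩, huv⟩ <;> rcases y with v' | ⟨⟨u', v'⟩, huv'⟩ <;>
    simp only [transform, head, tail?] <;> grind

theorem le_eq_of_E {x y : (transform G).V} (h : (transform G).E x y) :
    (transform G).le x y = G.le (head x) (head y) := by
  rcases x with v | ⟨⟨u, v⟩, huv⟩ <;> rcases y with v' | ⟨⟨u', v'⟩, huv'⟩ <;>
    simp_all [transform, head]

-- The vertex `(head x, w)` of `G'`; the junk value `.inl w` when `(head x, w) ∉ E_G` keeps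
-- `head (next x w) = w` unconditional.
noncomputable def next (x : (transform G).V) (w : G.V) : (transform G).V :=
  if h : G.E (head x) w then .inr ⟨(head x, w), h⟩ else .inl w

@[simp]
theorem head_next (x : (transform G).V) (w : G.V) : head (next x w) = w := by
  by_cases h : G.E (head x) w <;> simp only [next, h, ↓reduceDIte] <;> rfl

theorem tail?_next {x : (transform G).V} {w : G.V} (h : G.E (head x) w) :
    tail? (next x w) = some (head x) := by
  simp only [next, h, ↓reduceDIte]
  rfl

theorem next_head_of_E {x y : (transform G).V} (h : (transform G).E x y) :
    next x (head y) = y := by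
  obtain ⟨hE, hy, -⟩ := E_iff.1 h
  exact eq_of_head_eq_of_tail?_eq (head_next x _) ((tail?_next hE).trans hy.symm)

noncomputable def lift (x : (transform G).V) : VTree G.V → VTree (transform G).V
  | .node _ ps => .node x (ps.map fun p => lift (next x p.root) p)

@[simp]
theorem root_lift (x : (transform G).V) (p : VTree G.V) : (lift x p).root = x := by
  cases p; rw [lift]; rfl

theorem map_head_lift {x : (transform G).V} {p : VTree G.V} (h : p.root = head x) :
    (lift x p).map head = p := by
  induction p using VTree.induction generalizing x with
  | node u ps ih =>
    rw [lift, VTree.map, ← h]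
    congr 1
    conv_rhs => rw [← List.map_id ps]
    rw [List.map_map]
    exact List.map_congr_left fun p hp => ih p hp (head_next x p.root).symm

theorem lift_map_head {t : LTree A} {q : VTree (transform G).V}
    (hq : isPattern (transform G) t q) : lift q.root (q.map head) = q := by
  induction t using LTree.induction generalizing q with
  | node a cs ih =>
    obtain ⟨x, qs⟩ := q
    obtain ⟨-, -, hR⟩ := (isPattern_node_iff _ _ _ _ _).1 hq
    rw [VTree.map, VTree.root, lift, List.map_map]
    congr 1
    conv_rhs => rw [← List.map_id qs]
    refine List.map_congr_left fun q hqm => ?_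
    obtain ⟨c, hc, hE, -, hcq⟩ := hR.exists_mem_left hqm
    simp only [Function.comp_apply, VTree.root_map, next_head_of_E hE]
    exact ih c hc hcq

theorem isPattern_map_head {t : LTree A} {q : VTree (transform G).V}
    (hq : isPattern (transform G) t q) : isPattern G t (q.map head) := by
  induction t using LTree.induction generalizing q with
  | node a cs ih =>
    obtain ⟨x, qs⟩ := q
    obtain ⟨hl, hnd, hR⟩ := (isPattern_node_iff _ _ _ _ _).1 hq
    rw [VTree.map, isPattern_node_iff, List.map_map, List.forall₂_map_right_iff]
    refine ⟨(lv_eq x).symm.trans hl, ?_, hR.imp_of_mem fun c hc q _ ⟨hE, hle, hcq⟩ => ?_⟩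
    · have hroots : qs.map (VTree.root ∘ VTree.map head) = (qs.map VTree.root).map head := by
        simp [Function.comp_def]
      rw [hroots]
      refine hnd.map_on ?_
      simp only [List.mem_map]
      rintro _ ⟨q, hqm, rfl⟩ _ ⟨q', hqm', rfl⟩ h
      rw [← next_head_of_E (hq.adj_of_mem_children hqm), h,
        next_head_of_E (hq.adj_of_mem_children hqm')]
    · rw [VTree.root_map]
      exact ⟨(E_iff.1 hE).1, (le_eq_of_E hE).symm.trans hle, ih c hc hcq⟩

theorem noTot_map_head {t : LTree A} {q : VTree (transform G).V}
    (hq : isPattern (transform G) t q) : (q.map head).noTot := by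
  induction t using LTree.induction generalizing q with
  | node a cs ih =>
    obtain ⟨x, qs⟩ := q
    obtain ⟨-, -, hR⟩ := (isPattern_node_iff _ _ _ _ _).1 hq
    rw [VTree.map, VTree.noTot_node_iff]
    simp only [List.mem_map]
    rintro _ ⟨q, hqm, rfl⟩
    obtain ⟨c, hc, hE, -, hcq⟩ := hR.exists_mem_left hqm
    refine ⟨?_, ih c hc hcq⟩
    obtain ⟨y, rs⟩ := q
    simp only [VTree.map, VTree.children, List.mem_map]
    rintro _ ⟨r, hr, rfl⟩
    have hE' := hcq.adj_of_mem_children hr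
    rw [VTree.root_map]
    exact fun h => (E_iff.1 hE').2.2 (h ▸ (E_iff.1 hE).2.1)

theorem isPattern_lift {t : LTree A} {x : (transform G).V} {p : VTree G.V}
    (hp : isPattern G t p) (hnt : p.noTot) (hroot : p.root = head x)
    (hch : ∀ r ∈ p.children, tail? x ≠ some r.root) :
    isPattern (transform G) t (lift x p) := by
  induction t using LTree.induction generalizing x p with
  | node a cs ih =>
    obtain ⟨u, ps⟩ := p
    obtain ⟨hl, hnd, hR⟩ := (isPattern_node_iff _ _ _ _ _).1 hp
    subst hroot
    rw [VTree.noTot_node_iff] at hnt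
    rw [lift, isPattern_node_iff, List.map_map, List.forall₂_map_right_iff]
    refine ⟨(lv_eq x).trans hl, ?_, hR.imp_of_mem fun c hc r hr ⟨hE, hle, hcr⟩ => ?_⟩
    · refine List.Nodup.of_map head ?_
      simpa [List.map_map, Function.comp_def] using hnd
    · have hE' : (transform G).E x (next x r.root) :=
        E_iff.2 ⟨by rwa [head_next], tail?_next hE, by rw [head_next]; exact hch r hr⟩
      rw [root_lift]
      refine ⟨hE', by rw [le_eq_of_E hE', head_next]; exact hle,
        ih c hc hcr (hnt r hr).2 (head_next x _).symm ?_⟩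
      rw [tail?_next hE]
      exact fun d hd h => (hnt r hr).1 d hd (Option.some.inj h)

theorem psiRoot_inl (t : LTree A) (v : G.V) :
    psiRoot (transform G) t (.inl v) =
      {p : VTree G.V | isPattern G t p ∧ p.noTot ∧ p.root = v}.ncard := by
  symm
  refine Set.BijOn.ncard_eq
    (Set.InvOn.bijOn (f := lift (.inl v)) (f' := VTree.map head) ⟨?_, ?_⟩ ?_ ?_)
  · rintro p ⟨-, -, hroot⟩
    exact map_head_lift hroot
  · rintro q ⟨hq, hroot⟩
    simpa only [hroot] using lift_map_head hq
  · rintro p ⟨hp, hnt, hroot⟩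
    exact ⟨isPattern_lift hp hnt hroot fun _ _ => nofun, root_lift _ _⟩
  · rintro q ⟨hq, hroot⟩
    exact ⟨isPattern_map_head hq, noTot_map_head hq, by rw [VTree.root_map, hroot]; rfl⟩

end transform

/-- For every tree `t`, the number of no-tottering tree-patterns of `G` with respect
to `t` equals the number of tree-patterns of the transformed graph `G'` with respect
to `t` whose root is mapped into (the copy of) `V_G`:
`ψ_t^{NT}(G) = Σ_{v ∈ V_G} ψ_t^{(v)}(G')`. -/
theorem stmt_17 {A : Type} (G : LGraph A) (t : LTree A) :
    psiNT G t = ∑ v : G.V, psiRoot (transform G) t (Sum.inl v) := by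
  have hfin : {p : VTree G.V | isPattern G t p ∧ p.noTot}.Finite :=
    (finite_setOf_isPattern G t).subset fun p hp => hp.1
  rw [psiNT, hfin.ncard_eq_sum_ncard_fiber VTree.root]
  simp only [transform.psiRoot_inl, Set.mem_ofPred_eq, and_assoc]
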